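/- arXiv:2405.13490 — 3 statements merged into one kernel-verified Lean document; each statement's English description precedes it below -/
import Mathlib

section
/- Let n ≥ 1, let M and H be symmetric real n×n matrices, and let n̂ ∈ ℝⁿ. Suppose there are vectors v⁻, v₁, …, v_{n−1} forming a basis of ℝⁿ and real numbers μ₋ and μ₁, …, μ_{n−1} such that (M H) v⁻ = μ₋ v⁻, (M H) vᵢ = μᵢ vᵢ for each i, and ⟨vᵢ, n̂⟩ = 0 for each i = 1, …, n−1. Then H M n̂ = μ₋ n̂, i.e. n̂ is an eigenvector of H M with eigenvalue μ₋. -/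
open Matrix

/-- Lemma A.1 (`lm:nEV`): if `M H` has an eigenbasis consisting of `v⁻` (eigenvalue `μ₋`)
and `v₁, …, v_{n−1}` (eigenvalues `μᵢ`) with each `vᵢ` orthogonal to `n̂`, then
`H M n̂ = μ₋ n̂`. -/
theorem stmt0 (n : ℕ) (hn : 1 ≤ n)
    (M H : Matrix (Fin n) (Fin n) ℝ) (hMsymm : M.IsSymm) (hHsymm : H.IsSymm)
    (nhat : Fin n → ℝ)
    (vminus : Fin n → ℝ) (v : Fin (n - 1) → Fin n → ℝ)
    (μminus : ℝ) (μ : Fin (n - 1) → ℝ)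
    (hindep : LinearIndependent ℝ (Sum.elim (fun _ : Unit => vminus) v))
    (hspan : Submodule.span ℝ (Set.range (Sum.elim (fun _ : Unit => vminus) v)) = ⊤)
    (hvminus : (M * H).mulVec vminus = μminus • vminus)
    (hv : ∀ i, (M * H).mulVec (v i) = μ i • v i)
    (horth : ∀ i, v i ⬝ᵥ nhat = 0) :
    H.mulVec (M.mulVec nhat) = μminus • nhat := by
  set w : Fin n → ℝ := H.mulVec (M.mulVec nhat) - μminus • nhat with hw
  -- key: for any x, w ⬝ᵥ x = nhat ⬝ᵥ ((M*H).mulVec x) - μminus * (nhat ⬝ᵥ x)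
  have key : ∀ x : Fin n → ℝ, w ⬝ᵥ x = nhat ⬝ᵥ ((M * H).mulVec x) - μminus * (nhat ⬝ᵥ x) := by
    intro x
    have h1 : H.mulVec (M.mulVec nhat) = (H * M).mulVec nhat := by
      rw [mulVec_mulVec]
    have h2 : (H * M).mulVec nhat ⬝ᵥ x = nhat ⬝ᵥ ((M * H).mulVec x) := by
      rw [dotProduct_comm, dotProduct_mulVec, ← mulVec_transpose, transpose_mul,
        hMsymm.eq, hHsymm.eq]
      exact dotProduct_comm _ _
    simp [hw, sub_dotProduct, smul_dotProduct, h1, h2, smul_eq_mul]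
  -- w is orthogonal to each basis vector
  have hbasis : ∀ x ∈ Set.range (Sum.elim (fun _ : Unit => vminus) v), w ⬝ᵥ x = 0 := by
    rintro x ⟨(i | i), rfl⟩
    · simp [key, hvminus, dotProduct_smul, smul_eq_mul, mul_comm]
    · have := horth i
      rw [dotProduct_comm] at this
      simp [key, hv i, dotProduct_smul, smul_eq_mul, this]
  -- hence w is orthogonal to everything
  have hall : ∀ x : Fin n → ℝ, w ⬝ᵥ x = 0 := by
    intro x
    have hx : x ∈ Submodule.span ℝ (Set.range (Sum.elim (fun _ : Unit => vminus) v)) := by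
      rw [hspan]; trivial
    induction hx using Submodule.span_induction with
    | mem y hy => exact hbasis y hy
    | zero => simp
    | add y z _ _ hy hz => rw [dotProduct_add, hy, hz, add_zero]
    | smul c y _ hy => rw [dotProduct_smul, hy, smul_zero]
  have : w = 0 := dotProduct_self_eq_zero.mp (hall w)
  exact sub_eq_zero.mp this
end

section
/- Let n ≥ 2, let H be a symmetric positive-definite real n×n matrix, let m̂ ∈ ℝⁿ be a unit vector, and let (b₁, …, b_{n−1}) be an orthonormal basis of the orthogonal complement m̂⊥ = {y ∈ ℝⁿ : ⟨y, m̂⟩ = 0}. Let H|_{m̂⊥} denote the (n−1)×(n−1) matrix with entries ⟨bᵢ, H bⱼ⟩. Then det(H|_{m̂⊥}) = det(H) · ⟨m̂, H⁻¹ m̂⟩. -/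
open Matrix
open scoped RealInnerProductSpace

/-- The determinant of the restriction of a positive-definite quadratic form `H` to the
hyperplane orthogonal to a unit vector `m̂`, expressed in an orthonormal basis
`b₁, …, b_{n−1}` of `m̂⊥`, equals `det H · ⟨m̂, H⁻¹ m̂⟩`. -/
theorem stmt8 (n : ℕ) (hn : 2 ≤ n)
    (H : Matrix (Fin n) (Fin n) ℝ) (hHsymm : H.IsSymm) (hHpos : H.PosDef)
    (mhat : EuclideanSpace ℝ (Fin n)) (hmunit : ⟪mhat, mhat⟫ = 1)
    (b : Fin (n - 1) → EuclideanSpace ℝ (Fin n)) (hb : Orthonormal ℝ b)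
    (hbperp : ∀ i, ⟪b i, mhat⟫ = 0)
    (hbspan : Submodule.span ℝ (Set.range b) = (ℝ ∙ mhat)ᗮ) :
    (Matrix.det fun i j : Fin (n - 1) => ⟪b i, Matrix.toEuclideanLin H (b j)⟫) =
      H.det * ⟪mhat, Matrix.toEuclideanLin H⁻¹ mhat⟫ := by
  classical
  set v : Fin 1 ⊕ Fin (n - 1) → EuclideanSpace ℝ (Fin n) :=
    Sum.elim (fun _ => mhat) b with hv
  have hbij : ∀ i j, ⟪b i, b j⟫ = if i = j then 1 else 0 := orthonormal_iff_ite.mp hb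
  have hon : Orthonormal ℝ v := by
    rw [orthonormal_iff_ite]
    rintro (i | i) (j | j)
    · rw [Subsingleton.elim i j, if_pos rfl]; exact hmunit
    · rw [if_neg (by simp), real_inner_comm]; exact hbperp j
    · rw [if_neg (by simp)]; exact hbperp i
    · rw [show (if (Sum.inr i : Fin 1 ⊕ Fin (n - 1)) = Sum.inr j then (1 : ℝ) else 0) =
        if i = j then 1 else 0 by simp]
      exact hbij i j
  have hsp : ⊤ ≤ Submodule.span ℝ (Set.range v) := by
    rw [hv, Set.Sum.elim_range, Submodule.span_union, Set.range_const, hbspan]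
    rw [show Submodule.span ℝ {mhat} = ℝ ∙ mhat from rfl,
      Submodule.sup_orthogonal_of_hasOrthogonalProjection]
  set B := OrthonormalBasis.mk hon hsp with hB
  have hBv : ∀ i, B i = v i := by
    intro i; rw [hB, OrthonormalBasis.coe_mk]
  set f := Matrix.toEuclideanLin H with hf
  set g := Matrix.toEuclideanLin H⁻¹ with hg
  set M := LinearMap.toMatrix B.toBasis B.toBasis f with hM
  set N := LinearMap.toMatrix B.toBasis B.toBasis g with hN
  have hentry : ∀ (h : EuclideanSpace ℝ (Fin n) →ₗ[ℝ] EuclideanSpace ℝ (Fin n)) i j,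
      LinearMap.toMatrix B.toBasis B.toBasis h i j = ⟪v i, h (v j)⟫ := by
    intro h i j
    rw [LinearMap.toMatrix_apply, OrthonormalBasis.coe_toBasis,
      OrthonormalBasis.coe_toBasis_repr_apply, OrthonormalBasis.repr_apply_apply, hBv, hBv]
  have hdetH : H.det ≠ 0 := hHpos.det_pos.ne'
  have hdetM : M.det = H.det := by
    rw [hM, LinearMap.det_toMatrix, hf, Matrix.toEuclideanLin_eq_toLin_orthonormal,
      LinearMap.det_toLin]
  have hdetM' : M.det ≠ 0 := hdetM ▸ hdetH
  have hMN : M * N = 1 := by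
    rw [hM, hN, ← LinearMap.toMatrix_comp B.toBasis B.toBasis B.toBasis, hf, hg,
      Matrix.toEuclideanLin_eq_toLin_orthonormal, ← Matrix.toLin_mul,
      Matrix.mul_nonsing_inv H (Ne.isUnit hdetH), Matrix.toLin_one, LinearMap.toMatrix_id]
  have hNinv : M⁻¹ = N := Matrix.inv_eq_right_inv hMN
  have hD : (Matrix.det fun i j : Fin (n - 1) => M (Sum.inr i) (Sum.inr j)) =
      M.adjugate (Sum.inl 0) (Sum.inl 0) := by
    rw [Matrix.adjugate_apply]
    have hupd : M.updateRow (Sum.inl 0) (Pi.single (Sum.inl 0) 1) =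
        Matrix.fromBlocks 1 0 (Matrix.of fun i j => M (Sum.inr i) (Sum.inl j))
          (Matrix.of fun i j => M (Sum.inr i) (Sum.inr j)) := by
      ext (i | i) (j | j)
      · rw [Subsingleton.elim i (0 : Fin 1), Matrix.updateRow_self]
        simp [Pi.single_apply, Subsingleton.elim j (0 : Fin 1), Matrix.one_apply]
      · rw [Subsingleton.elim i (0 : Fin 1), Matrix.updateRow_self]
        simp [Pi.single_apply]
      · rw [Matrix.updateRow_ne (by simp)]; rfl
      · rw [Matrix.updateRow_ne (by simp)]; rfl
    rw [hupd, Matrix.det_fromBlocks_zero₁₂, Matrix.det_one, one_mul]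
    rfl
  have hL : (Matrix.det fun i j : Fin (n - 1) => ⟪b i, f (b j)⟫) =
      (Matrix.det fun i j : Fin (n - 1) => M (Sum.inr i) (Sum.inr j)) := by
    congr 1; ext i j; rw [hM, hentry]; rfl
  have hR : ⟪mhat, g mhat⟫ = M⁻¹ (Sum.inl 0) (Sum.inl 0) := by
    rw [hNinv, hN, hentry]; rfl
  rw [hL, hR, Matrix.inv_def, ← hdetM, Matrix.smul_apply, hD, smul_eq_mul]
  rw [Ring.inverse_eq_inv']
  field_simp
end

section
/- Let κ > 0 and let K_κ : ℝ → ℝ be the Gaussian kernel K_κ(z) = (√(2π) κ)⁻¹ exp(−z²/(2κ²)). Let ρ : ℝ → ℝ be four times continuously differentiable with ρ and its derivatives up to order four bounded, and set S = sup_{y∈ℝ} |ρ⁗(y)|. Then for every x ∈ ℝ, the convolution (K_κ ⋆ ρ)(x) = ∫_ℝ ρ(x − y) K_κ(y) dy satisfies | (K_κ ⋆ ρ)(x) − ρ(x) − (κ²/2) ρ″(x) | ≤ (S/8) κ⁴. -/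
open Set MeasureTheory Real

lemma myIDW {n : ℕ∞} {f : ℝ → ℝ} (hf : ContDiff ℝ n f) {m : ℕ} (hm : (m : ℕ∞) ≤ n)
    {s : Set ℝ} (hs : UniqueDiffOn ℝ s) {x : ℝ} (hx : x ∈ s) :
    iteratedDerivWithin m f s x = iteratedDeriv m f x := by
  rw [iteratedDerivWithin_eq_iteratedFDerivWithin, iteratedDeriv_eq_iteratedFDeriv]
  congr 1
  exact (((contDiff_iff_ftaylorSeries.mp hf).hasFTaylorSeriesUpToOn
    s).eq_iteratedFDerivWithin_of_uniqueDiffOn (by exact_mod_cast hm) hs hx).symm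

lemma taylor4_nonneg {g : ℝ → ℝ} (hg : ContDiff ℝ 4 g) {S : ℝ}
    (hS : ∀ y, |iteratedDeriv 4 g y| ≤ S) {t : ℝ} (ht : 0 ≤ t) :
    |g t - (g 0 + iteratedDeriv 1 g 0 * t + iteratedDeriv 2 g 0 * t ^ 2 / 2
        + iteratedDeriv 3 g 0 * t ^ 3 / 6)| ≤ S * t ^ 4 / 24 := by
  simp only [iteratedDeriv_one]
  rcases eq_or_lt_of_le ht with rfl | ht
  · simp
  have hu : UniqueDiffOn ℝ (Icc (0:ℝ) t) := uniqueDiffOn_Icc ht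
  have h0 : (0:ℝ) ∈ Icc (0:ℝ) t := left_mem_Icc.mpr ht.le
  have hcd : ContDiffOn ℝ 3 g (Icc 0 t) := (hg.of_le (by norm_num)).contDiffOn
  have hdiff : DifferentiableOn ℝ (iteratedDerivWithin 3 g (Icc 0 t)) (Ioo 0 t) :=
    (hg.contDiffOn.differentiableOn_iteratedDerivWithin (by norm_num) hu).mono
      Ioo_subset_Icc_self
  obtain ⟨x', hx', hEq⟩ := taylor_mean_remainder_lagrange (n := 3) ht.ne
    (by rw [uIcc_of_le ht.le]; exact hcd) (by rw [uIcc_of_le ht.le, uIoo_of_le ht.le]; exact hdiff)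
  rw [uIcc_of_le ht.le] at hEq
  rw [uIoo_of_le ht.le] at hx'
  rw [taylor_within_apply] at hEq
  have e4 : iteratedDerivWithin 4 g (Icc 0 t) x' = iteratedDeriv 4 g x' :=
    myIDW hg (by norm_num) hu (Ioo_subset_Icc_self hx')
  have e : ∀ k : ℕ, k ≤ 4 → iteratedDerivWithin k g (Icc 0 t) 0 = iteratedDeriv k g 0 := by
    intro k hk
    exact myIDW hg (by exact_mod_cast hk) hu h0
  rw [Finset.sum_range_succ, Finset.sum_range_succ, Finset.sum_range_succ,
    Finset.sum_range_one] at hEq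
  rw [e4, e 0 (by norm_num), e 1 (by norm_num), e 2 (by norm_num), e 3 (by norm_num)] at hEq
  rw [iteratedDeriv_zero] at hEq
  simp only [sub_zero, smul_eq_mul] at hEq
  norm_num [Nat.factorial] at hEq
  have key : g t - (g 0 + deriv g 0 * t + iteratedDeriv 2 g 0 * t ^ 2 / 2
      + iteratedDeriv 3 g 0 * t ^ 3 / 6) = iteratedDeriv 4 g x' * t ^ 4 / 24 := by
    linarith [hEq]
  rw [key, abs_div, abs_mul, abs_pow, abs_of_pos ht,
    abs_of_pos (show (0:ℝ) < 24 by norm_num)]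
  gcongr
  exact hS x'

lemma taylor4 {g : ℝ → ℝ} (hg : ContDiff ℝ 4 g) {S : ℝ}
    (hS : ∀ y, |iteratedDeriv 4 g y| ≤ S) (t : ℝ) :
    |g t - (g 0 + iteratedDeriv 1 g 0 * t + iteratedDeriv 2 g 0 * t ^ 2 / 2
        + iteratedDeriv 3 g 0 * t ^ 3 / 6)| ≤ S * t ^ 4 / 24 := by
  rcases le_or_gt 0 t with ht | ht
  · exact taylor4_nonneg hg hS ht
  · have H := taylor4_nonneg (g := fun s => g (-s)) (hg.comp contDiff_neg)
      (S := S) (fun y => by rw [iteratedDeriv_comp_neg]; norm_num; exact hS (-y))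
      (t := -t) (by linarith)
    simp only [iteratedDeriv_comp_neg, neg_zero, neg_neg, smul_eq_mul] at H
    have e1 : g t - (g 0 + iteratedDeriv 1 g 0 * t + iteratedDeriv 2 g 0 * t ^ 2 / 2
        + iteratedDeriv 3 g 0 * t ^ 3 / 6)
        = g t - (g 0 + (-1) ^ 1 * iteratedDeriv 1 g 0 * (-t)
          + (-1) ^ 2 * iteratedDeriv 2 g 0 * (-t) ^ 2 / 2
          + (-1) ^ 3 * iteratedDeriv 3 g 0 * (-t) ^ 3 / 6) := by ring
    have e2 : S * t ^ 4 / 24 = S * (-t) ^ 4 / 24 := by ring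
    rw [e1, e2]
    exact H

lemma gauss_int {b : ℝ} (hb : 0 < b) (n : ℕ) :
    Integrable (fun y : ℝ => y ^ n * Real.exp (-b * y ^ 2)) := by
  have h := integrable_rpow_mul_exp_neg_mul_sq hb (s := (n : ℝ))
    (by exact_mod_cast (neg_one_lt_zero.trans_le (Nat.cast_nonneg n) : (-1:ℝ) < n))
  simpa [Real.rpow_natCast] using h

lemma gauss_hasDeriv {b : ℝ} (y : ℝ) :
    HasDerivAt (fun y : ℝ => Real.exp (-b * y ^ 2)) (-2 * b * y * Real.exp (-b * y ^ 2)) y := by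
  have h1 : HasDerivAt (fun y : ℝ => -b * y ^ 2) (-b * (2 * y ^ 1)) y :=
    (hasDerivAt_pow 2 y).const_mul (-b)
  have h2 := h1.exp
  convert h2 using 1
  ring

lemma gauss_odd {b : ℝ} (n : ℕ) (hn : Odd n) :
    ∫ y : ℝ, y ^ n * Real.exp (-b * y ^ 2) = 0 := by
  have h : ∫ y : ℝ, (-y) ^ n * Real.exp (-b * (-y) ^ 2)
      = ∫ y : ℝ, y ^ n * Real.exp (-b * y ^ 2) :=
    integral_neg_eq_self (fun y : ℝ => y ^ n * Real.exp (-b * y ^ 2)) (volume : Measure ℝ)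
  simp only [hn.neg_pow, neg_sq, neg_mul] at h
  rw [integral_neg] at h
  simp only [neg_mul]
  linarith

lemma gauss_m2 {b : ℝ} (hb : 0 < b) :
    ∫ y : ℝ, y ^ 2 * Real.exp (-b * y ^ 2) = Real.sqrt (π / b) / (2 * b) := by
  have hparts := integral_mul_deriv_eq_deriv_mul_of_integrable
    (u := fun y : ℝ => y) (u' := fun _ => (1:ℝ))
    (v := fun y : ℝ => Real.exp (-b * y ^ 2))
    (v' := fun y : ℝ => -2 * b * y * Real.exp (-b * y ^ 2))
    (fun y _ => hasDerivAt_id y) (fun y _ => gauss_hasDeriv y)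
    ?_ ?_ ?_
  · have h1 : ∫ y : ℝ, y * (-2 * b * y * Real.exp (-b * y ^ 2))
        = (-2 * b) * ∫ y : ℝ, y ^ 2 * Real.exp (-b * y ^ 2) := by
      rw [← integral_const_mul]
      congr 1; funext y; ring
    have h2 : ∫ y : ℝ, (1:ℝ) * Real.exp (-b * y ^ 2) = Real.sqrt (π / b) := by
      simpa using integral_gaussian b
    rw [h1, h2] at hparts
    field_simp at hparts ⊢
    linarith
  · have : ((fun y : ℝ => y) * fun y : ℝ => -2 * b * y * Real.exp (-b * y ^ 2))
        = fun y : ℝ => (-2 * b) * (y ^ 2 * Real.exp (-b * y ^ 2)) := by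
      funext y; simp [Pi.mul_apply]; ring
    rw [this]; exact (gauss_int hb 2).const_mul _
  · have : ((fun _ : ℝ => (1:ℝ)) * fun y : ℝ => Real.exp (-b * y ^ 2))
        = fun y : ℝ => y ^ 0 * Real.exp (-b * y ^ 2) := by
      funext y; simp [Pi.mul_apply]
    rw [this]; exact gauss_int hb 0
  · have : ((fun y : ℝ => y) * fun y : ℝ => Real.exp (-b * y ^ 2))
        = fun y : ℝ => y ^ 1 * Real.exp (-b * y ^ 2) := by
      funext y; simp [Pi.mul_apply]
    rw [this]; exact gauss_int hb 1

lemma gauss_m4 {b : ℝ} (hb : 0 < b) :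
    ∫ y : ℝ, y ^ 4 * Real.exp (-b * y ^ 2) = 3 * Real.sqrt (π / b) / (4 * b ^ 2) := by
  have hparts := integral_mul_deriv_eq_deriv_mul_of_integrable
    (u := fun y : ℝ => y ^ 3) (u' := fun y : ℝ => 3 * y ^ 2)
    (v := fun y : ℝ => Real.exp (-b * y ^ 2))
    (v' := fun y : ℝ => -2 * b * y * Real.exp (-b * y ^ 2))
    (fun y _ => by simpa using hasDerivAt_pow 3 y) (fun y _ => gauss_hasDeriv y)
    ?_ ?_ ?_
  · have h1 : ∫ y : ℝ, y ^ 3 * (-2 * b * y * Real.exp (-b * y ^ 2))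
        = (-2 * b) * ∫ y : ℝ, y ^ 4 * Real.exp (-b * y ^ 2) := by
      rw [← integral_const_mul]
      congr 1; funext y; ring
    have h2 : ∫ y : ℝ, 3 * y ^ 2 * Real.exp (-b * y ^ 2)
        = 3 * (Real.sqrt (π / b) / (2 * b)) := by
      rw [← gauss_m2 hb, ← integral_const_mul]
      congr 1; funext y; ring
    rw [h1, h2] at hparts
    field_simp at hparts ⊢
    linarith
  · have : ((fun y : ℝ => y ^ 3) * fun y : ℝ => -2 * b * y * Real.exp (-b * y ^ 2))
        = fun y : ℝ => (-2 * b) * (y ^ 4 * Real.exp (-b * y ^ 2)) := by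
      funext y; simp [Pi.mul_apply]; ring
    rw [this]; exact (gauss_int hb 4).const_mul _
  · have : ((fun y : ℝ => 3 * y ^ 2) * fun y : ℝ => Real.exp (-b * y ^ 2))
        = fun y : ℝ => 3 * (y ^ 2 * Real.exp (-b * y ^ 2)) := by
      funext y; simp [Pi.mul_apply]; ring
    rw [this]; exact (gauss_int hb 2).const_mul _
  · have : ((fun y : ℝ => y ^ 3) * fun y : ℝ => Real.exp (-b * y ^ 2))
        = fun y : ℝ => y ^ 3 * Real.exp (-b * y ^ 2) := by
      funext y; simp [Pi.mul_apply]
    rw [this]; exact gauss_int hb 3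

/-- Local approximation of convolution with a Gaussian kernel of standard deviation `κ`:
for `ρ` four times continuously differentiable with bounded derivatives up to order four,
`|(K_κ ⋆ ρ)(x) − ρ(x) − (κ²/2) ρ″(x)| ≤ (S/8) κ⁴` where `S` bounds `|ρ⁗|`. -/
theorem stmt17 (κ : ℝ) (hκ : 0 < κ)
    (ρ : ℝ → ℝ) (hρ : ContDiff ℝ 4 ρ)
    (hbdd : ∀ i ≤ 4, ∃ Ci : ℝ, ∀ x, |iteratedDeriv i ρ x| ≤ Ci)
    (S : ℝ) (hS : ∀ y, |iteratedDeriv 4 ρ y| ≤ S) :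
    ∀ x : ℝ,
      |(∫ y : ℝ, ρ (x - y) *
          ((Real.sqrt (2 * Real.pi) * κ)⁻¹ * Real.exp (-y ^ 2 / (2 * κ ^ 2)))) -
        ρ x - κ ^ 2 / 2 * iteratedDeriv 2 ρ x| ≤ S / 8 * κ ^ 4 := by
  intro x
  set b : ℝ := (2 * κ ^ 2)⁻¹ with hbdef
  have hb : 0 < b := by positivity
  set c : ℝ := (Real.sqrt (2 * π) * κ)⁻¹ with hcdef
  have hsq : 0 < Real.sqrt (2 * π) := Real.sqrt_pos.mpr (by positivity)
  have hc : 0 < c := by positivity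
  have hE : ∀ y : ℝ, Real.exp (-y ^ 2 / (2 * κ ^ 2)) = Real.exp (-b * y ^ 2) := by
    intro y; congr 1; rw [hbdef]; ring
  have hcs : c * Real.sqrt (π / b) = 1 := by
    have h1 : π / b = 2 * π * κ ^ 2 := by rw [hbdef]; field_simp
    rw [h1, show (2:ℝ) * π * κ ^ 2 = (2 * π) * κ ^ 2 by ring,
      Real.sqrt_mul (by positivity), Real.sqrt_sq hκ.le, hcdef]
    field_simp
  -- derivatives of the reflected-translated function
  have hgk : ∀ (k : ℕ) (y : ℝ), iteratedDeriv k (fun y : ℝ => ρ (x - y)) y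
      = (-1 : ℝ) ^ k * iteratedDeriv k ρ (x - y) := by
    intro k y
    have h0 : (fun y : ℝ => ρ (x - y)) = fun w : ℝ => ρ (x + -w) := by
      funext w; rw [sub_eq_add_neg]
    rw [h0]
    have h1 : iteratedDeriv k (fun w : ℝ => ρ (x + -w)) y
        = (-1 : ℝ) ^ k • iteratedDeriv k (fun z : ℝ => ρ (x + z)) (-y) :=
      iteratedDeriv_comp_neg k (fun z : ℝ => ρ (x + z)) y
    rw [h1, iteratedDeriv_comp_const_add, smul_eq_mul]
    norm_num [sub_eq_add_neg]
  have hg : ContDiff ℝ 4 (fun y : ℝ => ρ (x - y)) :=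
    hρ.comp (contDiff_const.sub contDiff_id)
  set P : ℝ → ℝ := fun y : ℝ => ρ x - deriv ρ x * y + iteratedDeriv 2 ρ x * y ^ 2 / 2
      - iteratedDeriv 3 ρ x * y ^ 3 / 6 with hP
  have hTay : ∀ y : ℝ, |ρ (x - y) - P y| ≤ S * y ^ 4 / 24 := by
    intro y
    simp only [hP]
    have H := taylor4 hg (S := S)
      (fun z => by rw [hgk]; norm_num; exact hS (x - z)) y
    simp only [hgk, sub_zero] at H
    norm_num at H
    convert H using 2
    ring
  have hSnn : 0 ≤ S := (abs_nonneg _).trans (hS 0)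
  obtain ⟨C0, hC0⟩ := hbdd 0 (by norm_num)
  have hC0' : ∀ z, |ρ z| ≤ C0 := by simpa [iteratedDeriv_zero] using hC0
  have hC0nn : 0 ≤ C0 := (abs_nonneg _).trans (hC0' 0)
  -- integrability of the main integrand
  have hmain : Integrable (fun y : ℝ => ρ (x - y) * (c * Real.exp (-b * y ^ 2))) := by
    apply Integrable.mono' (((gauss_int hb 0).const_mul (C0 * c)))
    · exact ((hρ.continuous.comp (continuous_const.sub continuous_id)).mul
        (continuous_const.mul (Real.continuous_exp.comp (by fun_prop)))).aestronglyMeasurable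
    · refine ae_of_all _ fun y => ?_
      have hEpos : 0 < Real.exp (-b * y ^ 2) := Real.exp_pos _
      rw [norm_mul, Real.norm_eq_abs, Real.norm_eq_abs,
        abs_of_pos (by positivity : (0:ℝ) < c * Real.exp (-b * y ^ 2))]
      calc |ρ (x - y)| * (c * Real.exp (-b * y ^ 2))
          ≤ C0 * (c * Real.exp (-b * y ^ 2)) := by
            apply mul_le_mul_of_nonneg_right (hC0' _) (by positivity)
        _ = C0 * c * (y ^ 0 * Real.exp (-b * y ^ 2)) := by ring
  -- the Taylor polynomial part
  have e : (fun y : ℝ => P y * (c * Real.exp (-b * y ^ 2)))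
      = fun y : ℝ => (c * ρ x) * (y ^ 0 * Real.exp (-b * y ^ 2))
        + (-(c * deriv ρ x)) * (y ^ 1 * Real.exp (-b * y ^ 2))
        + (c * iteratedDeriv 2 ρ x / 2) * (y ^ 2 * Real.exp (-b * y ^ 2))
        + (-(c * iteratedDeriv 3 ρ x / 6)) * (y ^ 3 * Real.exp (-b * y ^ 2)) := by
    funext y; simp only [hP]; ring
  have hTI : Integrable (fun y : ℝ => P y * (c * Real.exp (-b * y ^ 2))) := by
    rw [e]
    exact ((((gauss_int hb 0).const_mul _).add ((gauss_int hb 1).const_mul _)).add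
      ((gauss_int hb 2).const_mul _)).add ((gauss_int hb 3).const_mul _)
  have hTV : ∫ y : ℝ, P y * (c * Real.exp (-b * y ^ 2))
      = ρ x + κ ^ 2 / 2 * iteratedDeriv 2 ρ x := by
    rw [e]
    have i0 : Integrable (fun y : ℝ => c * ρ x * (y ^ 0 * Real.exp (-b * y ^ 2))) := (gauss_int hb 0).const_mul _
    have i1 : Integrable (fun y : ℝ => -(c * deriv ρ x) * (y ^ 1 * Real.exp (-b * y ^ 2))) := (gauss_int hb 1).const_mul _
    have i2 : Integrable (fun y : ℝ => c * iteratedDeriv 2 ρ x / 2 * (y ^ 2 * Real.exp (-b * y ^ 2))) := (gauss_int hb 2).const_mul _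
    have i3 : Integrable (fun y : ℝ => -(c * iteratedDeriv 3 ρ x / 6) * (y ^ 3 * Real.exp (-b * y ^ 2))) := (gauss_int hb 3).const_mul _
    have i01 : Integrable (fun y : ℝ => c * ρ x * (y ^ 0 * Real.exp (-b * y ^ 2)) + -(c * deriv ρ x) * (y ^ 1 * Real.exp (-b * y ^ 2))) := i0.add i1
    have i012 : Integrable (fun y : ℝ => c * ρ x * (y ^ 0 * Real.exp (-b * y ^ 2)) + -(c * deriv ρ x) * (y ^ 1 * Real.exp (-b * y ^ 2)) + c * iteratedDeriv 2 ρ x / 2 * (y ^ 2 * Real.exp (-b * y ^ 2))) := i01.add i2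
    have s3 : ∫ y : ℝ, c * ρ x * (y ^ 0 * Real.exp (-b * y ^ 2)) + -(c * deriv ρ x) * (y ^ 1 * Real.exp (-b * y ^ 2)) + c * iteratedDeriv 2 ρ x / 2 * (y ^ 2 * Real.exp (-b * y ^ 2)) + -(c * iteratedDeriv 3 ρ x / 6) * (y ^ 3 * Real.exp (-b * y ^ 2))
        = (∫ y : ℝ, c * ρ x * (y ^ 0 * Real.exp (-b * y ^ 2)) + -(c * deriv ρ x) * (y ^ 1 * Real.exp (-b * y ^ 2)) + c * iteratedDeriv 2 ρ x / 2 * (y ^ 2 * Real.exp (-b * y ^ 2))) + ∫ y : ℝ, -(c * iteratedDeriv 3 ρ x / 6) * (y ^ 3 * Real.exp (-b * y ^ 2)) := integral_add i012 i3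
    have s2 : ∫ y : ℝ, c * ρ x * (y ^ 0 * Real.exp (-b * y ^ 2)) + -(c * deriv ρ x) * (y ^ 1 * Real.exp (-b * y ^ 2)) + c * iteratedDeriv 2 ρ x / 2 * (y ^ 2 * Real.exp (-b * y ^ 2))
        = (∫ y : ℝ, c * ρ x * (y ^ 0 * Real.exp (-b * y ^ 2)) + -(c * deriv ρ x) * (y ^ 1 * Real.exp (-b * y ^ 2))) + ∫ y : ℝ, c * iteratedDeriv 2 ρ x / 2 * (y ^ 2 * Real.exp (-b * y ^ 2)) := integral_add i01 i2
    have s1 : ∫ y : ℝ, c * ρ x * (y ^ 0 * Real.exp (-b * y ^ 2)) + -(c * deriv ρ x) * (y ^ 1 * Real.exp (-b * y ^ 2))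
        = (∫ y : ℝ, c * ρ x * (y ^ 0 * Real.exp (-b * y ^ 2))) + ∫ y : ℝ, -(c * deriv ρ x) * (y ^ 1 * Real.exp (-b * y ^ 2)) := integral_add i0 i1
    rw [s3, s2, s1]
    rw [integral_const_mul, integral_const_mul, integral_const_mul, integral_const_mul]
    rw [gauss_odd 1 odd_one, gauss_odd 3 (by decide), gauss_m2 hb]
    have h00 : ∫ y : ℝ, y ^ 0 * Real.exp (-b * y ^ 2) = Real.sqrt (π / b) := by
      simpa using integral_gaussian b
    rw [h00]
    have hinv : (1:ℝ) / (2 * b) = κ ^ 2 := by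
      rw [hbdef]; field_simp
    calc c * ρ x * Real.sqrt (π / b) + -(c * deriv ρ x) * 0
          + c * iteratedDeriv 2 ρ x / 2 * (Real.sqrt (π / b) / (2 * b))
          + -(c * iteratedDeriv 3 ρ x / 6) * 0
        = ρ x * (c * Real.sqrt (π / b))
          + iteratedDeriv 2 ρ x / 2 * (c * Real.sqrt (π / b)) * (1 / (2 * b)) := by ring
      _ = ρ x + κ ^ 2 / 2 * iteratedDeriv 2 ρ x := by rw [hcs, hinv]; ring
  -- the remainder part
  have hRI : Integrable (fun y : ℝ => (ρ (x - y) - P y) * (c * Real.exp (-b * y ^ 2))) := by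
    have e2 : (fun y : ℝ => (ρ (x - y) - P y) * (c * Real.exp (-b * y ^ 2)))
        = fun y : ℝ => ρ (x - y) * (c * Real.exp (-b * y ^ 2))
          - P y * (c * Real.exp (-b * y ^ 2)) := by funext y; ring
    rw [e2]; exact hmain.sub hTI
  have hRbound : |∫ y : ℝ, (ρ (x - y) - P y) * (c * Real.exp (-b * y ^ 2))|
      ≤ S / 8 * κ ^ 4 := by
    have h1 : ‖∫ y : ℝ, (ρ (x - y) - P y) * (c * Real.exp (-b * y ^ 2))‖
        ≤ ∫ y : ℝ, (S * c / 24) * (y ^ 4 * Real.exp (-b * y ^ 2)) := by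
      apply norm_integral_le_of_norm_le ((gauss_int hb 4).const_mul _)
      refine ae_of_all _ fun y => ?_
      have hEpos : 0 < Real.exp (-b * y ^ 2) := Real.exp_pos _
      rw [norm_mul, Real.norm_eq_abs, Real.norm_eq_abs,
        abs_of_pos (by positivity : (0:ℝ) < c * Real.exp (-b * y ^ 2))]
      calc |ρ (x - y) - P y| * (c * Real.exp (-b * y ^ 2))
          ≤ (S * y ^ 4 / 24) * (c * Real.exp (-b * y ^ 2)) := by
            apply mul_le_mul_of_nonneg_right (hTay y) (by positivity)
        _ = (S * c / 24) * (y ^ 4 * Real.exp (-b * y ^ 2)) := by ring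
    have h2 : ∫ y : ℝ, (S * c / 24) * (y ^ 4 * Real.exp (-b * y ^ 2)) = S / 8 * κ ^ 4 := by
      rw [integral_const_mul, gauss_m4 hb]
      have hinv2 : (1:ℝ) / b ^ 2 = 4 * κ ^ 4 := by
        rw [hbdef]; field_simp; ring
      calc S * c / 24 * (3 * Real.sqrt (π / b) / (4 * b ^ 2))
          = (c * Real.sqrt (π / b)) * (S / 32) * (1 / b ^ 2) := by ring
        _ = S / 8 * κ ^ 4 := by rw [hcs, hinv2]; ring
    rw [← h2]
    exact h1
  -- put everything together
  have hIv : ∫ y : ℝ, ρ (x - y) * (c * Real.exp (-b * y ^ 2))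
      = (∫ y : ℝ, P y * (c * Real.exp (-b * y ^ 2)))
        + ∫ y : ℝ, (ρ (x - y) - P y) * (c * Real.exp (-b * y ^ 2)) := by
    rw [← integral_add hTI hRI]
    congr 1; funext y; ring
  calc |(∫ y : ℝ, ρ (x - y) * (c * Real.exp (-y ^ 2 / (2 * κ ^ 2))))
        - ρ x - κ ^ 2 / 2 * iteratedDeriv 2 ρ x|
      = |∫ y : ℝ, (ρ (x - y) - P y) * (c * Real.exp (-b * y ^ 2))| := by
        simp only [hE]
        rw [hIv, hTV]
        congr 1
        ring
    _ ≤ S / 8 * κ ^ 4 := hRbound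
end
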